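/- arXiv:1808.09302 — 5 statements merged into one kernel-verified Lean document; each statement's English description precedes it below -/
import Mathlib

section
/- Let A, B, C be the quantum Chevalley matrices of the Bott-Samelson variety Z(α₁,α₂,α₁) defined in the context. Then C² = B·C − 2·A·C + q₃·A − q₃·B + q₂·I as matrices over R. (This is the matrix form, in the regular representation on the Bott-Samelson basis, of the third quantum relation σ₀₀₁ ∗ σ₀₀₁ = q₁q₃ + q₂ − q₃σ₁₀₀ + q₃σ₀₁₀ − 2σ₁₀₁ + σ₀₁₁, using the Giambelli expressions σ₁₀₁ = σ₁₀₀σ₀₀₁ − q₃σ₁₀₀ + q₃σ₀₁₀ + q₁q₃ and σ₀₁₁ = σ₀₁₀σ₀₀₁ + q₁q₃, in the presentation of QH*(Z(α₁,α₂,α₁)).) -/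
open MvPolynomial Matrix

noncomputable section

abbrev R : Type := MvPolynomial (Fin 3) ℤ

noncomputable def q1 : R := X 0
noncomputable def q2 : R := X 1
noncomputable def q3 : R := X 2

section Aux
variable {α : Type*}
@[simp] lemma vec8_0 (a₀ a₁ a₂ a₃ a₄ a₅ a₆ a₇ : α) : ![a₀,a₁,a₂,a₃,a₄,a₅,a₆,a₇] (0 : Fin 8) = a₀ := rfl
@[simp] lemma vec8_1 (a₀ a₁ a₂ a₃ a₄ a₅ a₆ a₇ : α) : ![a₀,a₁,a₂,a₃,a₄,a₅,a₆,a₇] (1 : Fin 8) = a₁ := rfl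
@[simp] lemma vec8_2 (a₀ a₁ a₂ a₃ a₄ a₅ a₆ a₇ : α) : ![a₀,a₁,a₂,a₃,a₄,a₅,a₆,a₇] (2 : Fin 8) = a₂ := rfl
@[simp] lemma vec8_3 (a₀ a₁ a₂ a₃ a₄ a₅ a₆ a₇ : α) : ![a₀,a₁,a₂,a₃,a₄,a₅,a₆,a₇] (3 : Fin 8) = a₃ := rfl
@[simp] lemma vec8_4 (a₀ a₁ a₂ a₃ a₄ a₅ a₆ a₇ : α) : ![a₀,a₁,a₂,a₃,a₄,a₅,a₆,a₇] (4 : Fin 8) = a₄ := rfl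
@[simp] lemma vec8_5 (a₀ a₁ a₂ a₃ a₄ a₅ a₆ a₇ : α) : ![a₀,a₁,a₂,a₃,a₄,a₅,a₆,a₇] (5 : Fin 8) = a₅ := rfl
@[simp] lemma vec8_6 (a₀ a₁ a₂ a₃ a₄ a₅ a₆ a₇ : α) : ![a₀,a₁,a₂,a₃,a₄,a₅,a₆,a₇] (6 : Fin 8) = a₆ := rfl
@[simp] lemma vec8_7 (a₀ a₁ a₂ a₃ a₄ a₅ a₆ a₇ : α) : ![a₀,a₁,a₂,a₃,a₄,a₅,a₆,a₇] (7 : Fin 8) = a₇ := rfl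
@[simp] lemma vec8_0' (h : 0 < 8) (a₀ a₁ a₂ a₃ a₄ a₅ a₆ a₇ : α) : ![a₀,a₁,a₂,a₃,a₄,a₅,a₆,a₇] ⟨0,h⟩ = a₀ := rfl
@[simp] lemma vec8_1' (h : 1 < 8) (a₀ a₁ a₂ a₃ a₄ a₅ a₆ a₇ : α) : ![a₀,a₁,a₂,a₃,a₄,a₅,a₆,a₇] ⟨1,h⟩ = a₁ := rfl
@[simp] lemma vec8_2' (h : 2 < 8) (a₀ a₁ a₂ a₃ a₄ a₅ a₆ a₇ : α) : ![a₀,a₁,a₂,a₃,a₄,a₅,a₆,a₇] ⟨2,h⟩ = a₂ := rfl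
@[simp] lemma vec8_3' (h : 3 < 8) (a₀ a₁ a₂ a₃ a₄ a₅ a₆ a₇ : α) : ![a₀,a₁,a₂,a₃,a₄,a₅,a₆,a₇] ⟨3,h⟩ = a₃ := rfl
@[simp] lemma vec8_4' (h : 4 < 8) (a₀ a₁ a₂ a₃ a₄ a₅ a₆ a₇ : α) : ![a₀,a₁,a₂,a₃,a₄,a₅,a₆,a₇] ⟨4,h⟩ = a₄ := rfl
@[simp] lemma vec8_5' (h : 5 < 8) (a₀ a₁ a₂ a₃ a₄ a₅ a₆ a₇ : α) : ![a₀,a₁,a₂,a₃,a₄,a₅,a₆,a₇] ⟨5,h⟩ = a₅ := rfl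
@[simp] lemma vec8_6' (h : 6 < 8) (a₀ a₁ a₂ a₃ a₄ a₅ a₆ a₇ : α) : ![a₀,a₁,a₂,a₃,a₄,a₅,a₆,a₇] ⟨6,h⟩ = a₆ := rfl
@[simp] lemma vec8_7' (h : 7 < 8) (a₀ a₁ a₂ a₃ a₄ a₅ a₆ a₇ : α) : ![a₀,a₁,a₂,a₃,a₄,a₅,a₆,a₇] ⟨7,h⟩ = a₇ := rfl
end Aux

/-- Quantum Chevalley matrix of multiplication by σ₁₀₀. -/
noncomputable def A : Matrix (Fin 8) (Fin 8) R :=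
  !![0, q1*q3, q1*q3, -(q1*q3), 0, 0, 0, q1*q2*q3;
     1, -q3, 0, q3, q1*q3, q1*q3, 0, 0;
     0, q3, 0, -q3, 0, 0, 0, 0;
     0, 0, 0, 0, q1*q3, q1*q3, 0, 0;
     0, 0, 1, 0, 0, q3, 0, 0;
     0, 0, 0, 1, 0, -q3, 0, 0;
     0, 0, 0, 0, 0, q3, 0, q1*q3;
     0, 0, 0, 0, 0, 0, 1, 0]

/-- Quantum Chevalley matrix of multiplication by σ₀₁₀. -/
noncomputable def B : Matrix (Fin 8) (Fin 8) R :=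
  !![0, q1*q3, q1*q3, -(q1*q3), 0, 0, q1*q2, q1*q2*q3;
     0, 0, 2*q1, 0, q1*q3, q1*q3, 0, q1*q2;
     1, 0, -q1, 0, 0, 0, 0, 0;
     0, 0, q1, 0, q1*q3, q1*q3, 0, 0;
     0, 1, 1, 0, -q1, 0, 0, 0;
     0, 0, 0, 0, q1, 0, 0, 0;
     0, 0, 0, 1, 0, 0, 0, q1*q3;
     0, 0, 0, 0, 0, 1, 1, 0]

/-- Quantum Chevalley matrix of multiplication by σ₀₀₁. -/
noncomputable def C : Matrix (Fin 8) (Fin 8) R :=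
  !![0, -(q1*q3), -(q1*q3), q1*q3+q2, 0, 0, q1*q2, 0;
     0, q3, 0, -q3, -(q1*q3), -(q1*q3)+q2, 0, q1*q2;
     0, -q3, 0, q3, 0, 0, q2, 0;
     1, 0, 0, 0, -(q1*q3), -(q1*q3), 0, 0;
     0, 0, 0, 0, 0, -q3, 0, q2;
     0, 1, 0, -2, 0, q3, 0, 0;
     0, 0, 1, 1, 0, -q3, 0, -(q1*q3);
     0, 0, 0, 0, 1, 1, -1, 0]

set_option maxHeartbeats 4000000 in
/-- Third quantum relation in matrix form: C² = B·C − 2·A·C + q₃·A − q₃·B + q₂·I. -/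
theorem stmt_2 :
    C * C = B * C - (2 : R) • (A * C) + q3 • A - q3 • B
      + q2 • (1 : Matrix (Fin 8) (Fin 8) R) := by
  refine Matrix.ext fun i j => ?_
  fin_cases i <;> fin_cases j <;>
  · simp only [Matrix.mul_apply, Fin.sum_univ_eight, Matrix.sub_apply, Matrix.add_apply,
      Matrix.smul_apply, Matrix.one_apply, smul_eq_mul, _root_.A, _root_.B, _root_.C,
      Matrix.of_apply, Fin.isValue, vec8_0, vec8_1, vec8_2, vec8_3, vec8_4, vec8_5,
      vec8_6, vec8_7, vec8_0', vec8_1', vec8_2', vec8_3', vec8_4', vec8_5', vec8_6', vec8_7',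
      Fin.ext_iff, Fin.val_zero, Fin.val_one]
    try norm_num
    try ring
end
end

section
/- Let A, B, C be the quantum Chevalley matrices of the Bott-Samelson variety Z(α₁,α₂,α₁) defined in the context. Then A, B, C pairwise commute: A·B = B·A, A·C = C·A, and B·C = C·B as matrices over R. (This expresses the commutativity of the small quantum cohomology ring QH*(Z(α₁,α₂,α₁)), which was used to solve for the unknown Gromov-Witten invariants.) -/
open MvPolynomial Matrix

noncomputable section

lemma vc0 {α : Type*} (a0 a1 a2 a3 a4 a5 a6 a7 : α) : ![a0,a1,a2,a3,a4,a5,a6,a7] (0 : Fin 8) = a0 := rfl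
lemma vc1 {α : Type*} (a0 a1 a2 a3 a4 a5 a6 a7 : α) : ![a0,a1,a2,a3,a4,a5,a6,a7] (1 : Fin 8) = a1 := rfl
lemma vc2 {α : Type*} (a0 a1 a2 a3 a4 a5 a6 a7 : α) : ![a0,a1,a2,a3,a4,a5,a6,a7] (2 : Fin 8) = a2 := rfl
lemma vc3 {α : Type*} (a0 a1 a2 a3 a4 a5 a6 a7 : α) : ![a0,a1,a2,a3,a4,a5,a6,a7] (3 : Fin 8) = a3 := rfl
lemma vc4 {α : Type*} (a0 a1 a2 a3 a4 a5 a6 a7 : α) : ![a0,a1,a2,a3,a4,a5,a6,a7] (4 : Fin 8) = a4 := rfl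
lemma vc5 {α : Type*} (a0 a1 a2 a3 a4 a5 a6 a7 : α) : ![a0,a1,a2,a3,a4,a5,a6,a7] (5 : Fin 8) = a5 := rfl
lemma vc6 {α : Type*} (a0 a1 a2 a3 a4 a5 a6 a7 : α) : ![a0,a1,a2,a3,a4,a5,a6,a7] (6 : Fin 8) = a6 := rfl
lemma vc7 {α : Type*} (a0 a1 a2 a3 a4 a5 a6 a7 : α) : ![a0,a1,a2,a3,a4,a5,a6,a7] (7 : Fin 8) = a7 := rfl
lemma vm0 {α : Type*} (a0 a1 a2 a3 a4 a5 a6 a7 : α) (h : (0:ℕ) < 8) : ![a0,a1,a2,a3,a4,a5,a6,a7] (⟨0,h⟩ : Fin 8) = a0 := rfl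
lemma vm1 {α : Type*} (a0 a1 a2 a3 a4 a5 a6 a7 : α) (h : (1:ℕ) < 8) : ![a0,a1,a2,a3,a4,a5,a6,a7] (⟨1,h⟩ : Fin 8) = a1 := rfl
lemma vm2 {α : Type*} (a0 a1 a2 a3 a4 a5 a6 a7 : α) (h : (2:ℕ) < 8) : ![a0,a1,a2,a3,a4,a5,a6,a7] (⟨2,h⟩ : Fin 8) = a2 := rfl
lemma vm3 {α : Type*} (a0 a1 a2 a3 a4 a5 a6 a7 : α) (h : (3:ℕ) < 8) : ![a0,a1,a2,a3,a4,a5,a6,a7] (⟨3,h⟩ : Fin 8) = a3 := rfl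
lemma vm4 {α : Type*} (a0 a1 a2 a3 a4 a5 a6 a7 : α) (h : (4:ℕ) < 8) : ![a0,a1,a2,a3,a4,a5,a6,a7] (⟨4,h⟩ : Fin 8) = a4 := rfl
lemma vm5 {α : Type*} (a0 a1 a2 a3 a4 a5 a6 a7 : α) (h : (5:ℕ) < 8) : ![a0,a1,a2,a3,a4,a5,a6,a7] (⟨5,h⟩ : Fin 8) = a5 := rfl
lemma vm6 {α : Type*} (a0 a1 a2 a3 a4 a5 a6 a7 : α) (h : (6:ℕ) < 8) : ![a0,a1,a2,a3,a4,a5,a6,a7] (⟨6,h⟩ : Fin 8) = a6 := rfl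
lemma vm7 {α : Type*} (a0 a1 a2 a3 a4 a5 a6 a7 : α) (h : (7:ℕ) < 8) : ![a0,a1,a2,a3,a4,a5,a6,a7] (⟨7,h⟩ : Fin 8) = a7 := rfl

theorem vec8_eq {α : Type*} {x₀ x₁ x₂ x₃ x₄ x₅ x₆ x₇ y₀ y₁ y₂ y₃ y₄ y₅ y₆ y₇ : α}
    (h₀ : x₀ = y₀) (h₁ : x₁ = y₁) (h₂ : x₂ = y₂) (h₃ : x₃ = y₃)
    (h₄ : x₄ = y₄) (h₅ : x₅ = y₅) (h₆ : x₆ = y₆) (h₇ : x₇ = y₇) :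
    ![x₀, x₁, x₂, x₃, x₄, x₅, x₆, x₇] = ![y₀, y₁, y₂, y₃, y₄, y₅, y₆, y₇] := by
  subst_vars; rfl

set_option maxHeartbeats 2000000 in
theorem mul_fin_eight {α : Type*} [AddCommMonoid α] [Mul α] (a00 a01 a02 a03 a04 a05 a06 a07 a10 a11 a12 a13 a14 a15 a16 a17 a20 a21 a22 a23 a24 a25 a26 a27 a30 a31 a32 a33 a34 a35 a36 a37 a40 a41 a42 a43 a44 a45 a46 a47 a50 a51 a52 a53 a54 a55 a56 a57 a60 a61 a62 a63 a64 a65 a66 a67 a70 a71 a72 a73 a74 a75 a76 a77 b00 b01 b02 b03 b04 b05 b06 b07 b10 b11 b12 b13 b14 b15 b16 b17 b20 b21 b22 b23 b24 b25 b26 b27 b30 b31 b32 b33 b34 b35 b36 b37 b40 b41 b42 b43 b44 b45 b46 b47 b50 b51 b52 b53 b54 b55 b56 b57 b60 b61 b62 b63 b64 b65 b66 b67 b70 b71 b72 b73 b74 b75 b76 b77 : α) :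
    !![a00, a01, a02, a03, a04, a05, a06, a07;
       a10, a11, a12, a13, a14, a15, a16, a17;
       a20, a21, a22, a23, a24, a25, a26, a27;
       a30, a31, a32, a33, a34, a35, a36, a37;
       a40, a41, a42, a43, a44, a45, a46, a47;
       a50, a51, a52, a53, a54, a55, a56, a57;
       a60, a61, a62, a63, a64, a65, a66, a67;
       a70, a71, a72, a73, a74, a75, a76, a77] * !![b00, b01, b02, b03, b04, b05, b06, b07;
       b10, b11, b12, b13, b14, b15, b16, b17;
       b20, b21, b22, b23, b24, b25, b26, b27;
       b30, b31, b32, b33, b34, b35, b36, b37;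
       b40, b41, b42, b43, b44, b45, b46, b47;
       b50, b51, b52, b53, b54, b55, b56, b57;
       b60, b61, b62, b63, b64, b65, b66, b67;
       b70, b71, b72, b73, b74, b75, b76, b77] =
    !![a00 * b00 + a01 * b10 + a02 * b20 + a03 * b30 + a04 * b40 + a05 * b50 + a06 * b60 + a07 * b70, a00 * b01 + a01 * b11 + a02 * b21 + a03 * b31 + a04 * b41 + a05 * b51 + a06 * b61 + a07 * b71, a00 * b02 + a01 * b12 + a02 * b22 + a03 * b32 + a04 * b42 + a05 * b52 + a06 * b62 + a07 * b72, a00 * b03 + a01 * b13 + a02 * b23 + a03 * b33 + a04 * b43 + a05 * b53 + a06 * b63 + a07 * b73, a00 * b04 + a01 * b14 + a02 * b24 + a03 * b34 + a04 * b44 + a05 * b54 + a06 * b64 + a07 * b74, a00 * b05 + a01 * b15 + a02 * b25 + a03 * b35 + a04 * b45 + a05 * b55 + a06 * b65 + a07 * b75, a00 * b06 + a01 * b16 + a02 * b26 + a03 * b36 + a04 * b46 + a05 * b56 + a06 * b66 + a07 * b76, a00 * b07 + a01 * b17 + a02 * b27 + a03 * b37 + a04 * b47 + a05 * b57 + a06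 * b67 + a07 * b77;
       a10 * b00 + a11 * b10 + a12 * b20 + a13 * b30 + a14 * b40 + a15 * b50 + a16 * b60 + a17 * b70, a10 * b01 + a11 * b11 + a12 * b21 + a13 * b31 + a14 * b41 + a15 * b51 + a16 * b61 + a17 * b71, a10 * b02 + a11 * b12 + a12 * b22 + a13 * b32 + a14 * b42 + a15 * b52 + a16 * b62 + a17 * b72, a10 * b03 + a11 * b13 + a12 * b23 + a13 * b33 + a14 * b43 + a15 * b53 + a16 * b63 + a17 * b73, a10 * b04 + a11 * b14 + a12 * b24 + a13 * b34 + a14 * b44 + a15 * b54 + a16 * b64 + a17 * b74, a10 * b05 + a11 * b15 + a12 * b25 + a13 * b35 + a14 * b45 + a15 * b55 + a16 * b65 + a17 * b75, a10 * b06 + a11 * b16 + a12 * b26 + a13 * b36 + a14 * b46 + a15 * b56 + a16 * b66 + a17 * b76, a10 * b07 + a11 * b17 + a12 * b27 + a13 * b37 + a14 * b47 + a15 * b57 + a16 * b67 + a17 * b77;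
       a20 * b00 + a21 * b10 + a22 * b20 + a23 * b30 + a24 * b40 + a25 * b50 + a26 * b60 + a27 * b70, a20 * b01 + a21 * b11 + a22 * b21 + a23 * b31 + a24 * b41 + a25 * b51 + a26 * b61 + a27 * b71, a20 * b02 + a21 * b12 + a22 * b22 + a23 * b32 + a24 * b42 + a25 * b52 + a26 * b62 + a27 * b72, a20 * b03 + a21 * b13 + a22 * b23 + a23 * b33 + a24 * b43 + a25 * b53 + a26 * b63 + a27 * b73, a20 * b04 + a21 * b14 + a22 * b24 + a23 * b34 + a24 * b44 + a25 * b54 + a26 * b64 + a27 * b74, a20 * b05 + a21 * b15 + a22 * b25 + a23 * b35 + a24 * b45 + a25 * b55 + a26 * b65 + a27 * b75, a20 * b06 + a21 * b16 + a22 * b26 + a23 * b36 + a24 * b46 + a25 * b56 + a26 * b66 + a27 * b76, a20 * b07 + a21 * b17 + a22 * b27 + a23 * b37 + a24 * b47 + a25 * b57 + a26 * b67 + a27 * b77;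
       a30 * b00 + a31 * b10 + a32 * b20 + a33 * b30 + a34 * b40 + a35 * b50 + a36 * b60 + a37 * b70, a30 * b01 + a31 * b11 + a32 * b21 + a33 * b31 + a34 * b41 + a35 * b51 + a36 * b61 + a37 * b71, a30 * b02 + a31 * b12 + a32 * b22 + a33 * b32 + a34 * b42 + a35 * b52 + a36 * b62 + a37 * b72, a30 * b03 + a31 * b13 + a32 * b23 + a33 * b33 + a34 * b43 + a35 * b53 + a36 * b63 + a37 * b73, a30 * b04 + a31 * b14 + a32 * b24 + a33 * b34 + a34 * b44 + a35 * b54 + a36 * b64 + a37 * b74, a30 * b05 + a31 * b15 + a32 * b25 + a33 * b35 + a34 * b45 + a35 * b55 + a36 * b65 + a37 * b75, a30 * b06 + a31 * b16 + a32 * b26 + a33 * b36 + a34 * b46 + a35 * b56 + a36 * b66 + a37 * b76, a30 * b07 + a31 * b17 + a32 * b27 + a33 * b37 + a34 * b47 + a35 * b57 + a36 * b67 + a37 * b77;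
       a40 * b00 + a41 * b10 + a42 * b20 + a43 * b30 + a44 * b40 + a45 * b50 + a46 * b60 + a47 * b70, a40 * b01 + a41 * b11 + a42 * b21 + a43 * b31 + a44 * b41 + a45 * b51 + a46 * b61 + a47 * b71, a40 * b02 + a41 * b12 + a42 * b22 + a43 * b32 + a44 * b42 + a45 * b52 + a46 * b62 + a47 * b72, a40 * b03 + a41 * b13 + a42 * b23 + a43 * b33 + a44 * b43 + a45 * b53 + a46 * b63 + a47 * b73, a40 * b04 + a41 * b14 + a42 * b24 + a43 * b34 + a44 * b44 + a45 * b54 + a46 * b64 + a47 * b74, a40 * b05 + a41 * b15 + a42 * b25 + a43 * b35 + a44 * b45 + a45 * b55 + a46 * b65 + a47 * b75, a40 * b06 + a41 * b16 + a42 * b26 + a43 * b36 + a44 * b46 + a45 * b56 + a46 * b66 + a47 * b76, a40 * b07 + a41 * b17 + a42 * b27 + a43 * b37 + a44 * b47 + a45 * b57 + a46 * b67 + a47 * b77;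
       a50 * b00 + a51 * b10 + a52 * b20 + a53 * b30 + a54 * b40 + a55 * b50 + a56 * b60 + a57 * b70, a50 * b01 + a51 * b11 + a52 * b21 + a53 * b31 + a54 * b41 + a55 * b51 + a56 * b61 + a57 * b71, a50 * b02 + a51 * b12 + a52 * b22 + a53 * b32 + a54 * b42 + a55 * b52 + a56 * b62 + a57 * b72, a50 * b03 + a51 * b13 + a52 * b23 + a53 * b33 + a54 * b43 + a55 * b53 + a56 * b63 + a57 * b73, a50 * b04 + a51 * b14 + a52 * b24 + a53 * b34 + a54 * b44 + a55 * b54 + a56 * b64 + a57 * b74, a50 * b05 + a51 * b15 + a52 * b25 + a53 * b35 + a54 * b45 + a55 * b55 + a56 * b65 + a57 * b75, a50 * b06 + a51 * b16 + a52 * b26 + a53 * b36 + a54 * b46 + a55 * b56 + a56 * b66 + a57 * b76, a50 * b07 + a51 * b17 + a52 * b27 + a53 * b37 + a54 * b47 + a55 * b57 + a56 * b67 + a57 * b77;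
       a60 * b00 + a61 * b10 + a62 * b20 + a63 * b30 + a64 * b40 + a65 * b50 + a66 * b60 + a67 * b70, a60 * b01 + a61 * b11 + a62 * b21 + a63 * b31 + a64 * b41 + a65 * b51 + a66 * b61 + a67 * b71, a60 * b02 + a61 * b12 + a62 * b22 + a63 * b32 + a64 * b42 + a65 * b52 + a66 * b62 + a67 * b72, a60 * b03 + a61 * b13 + a62 * b23 + a63 * b33 + a64 * b43 + a65 * b53 + a66 * b63 + a67 * b73, a60 * b04 + a61 * b14 + a62 * b24 + a63 * b34 + a64 * b44 + a65 * b54 + a66 * b64 + a67 * b74, a60 * b05 + a61 * b15 + a62 * b25 + a63 * b35 + a64 * b45 + a65 * b55 + a66 * b65 + a67 * b75, a60 * b06 + a61 * b16 + a62 * b26 + a63 * b36 + a64 * b46 + a65 * b56 + a66 * b66 + a67 * b76, a60 * b07 + a61 * b17 + a62 * b27 + a63 * b37 + a64 * b47 + a65 * b57 + a66 * b67 + a67 * b77;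
       a70 * b00 + a71 * b10 + a72 * b20 + a73 * b30 + a74 * b40 + a75 * b50 + a76 * b60 + a77 * b70, a70 * b01 + a71 * b11 + a72 * b21 + a73 * b31 + a74 * b41 + a75 * b51 + a76 * b61 + a77 * b71, a70 * b02 + a71 * b12 + a72 * b22 + a73 * b32 + a74 * b42 + a75 * b52 + a76 * b62 + a77 * b72, a70 * b03 + a71 * b13 + a72 * b23 + a73 * b33 + a74 * b43 + a75 * b53 + a76 * b63 + a77 * b73, a70 * b04 + a71 * b14 + a72 * b24 + a73 * b34 + a74 * b44 + a75 * b54 + a76 * b64 + a77 * b74, a70 * b05 + a71 * b15 + a72 * b25 + a73 * b35 + a74 * b45 + a75 * b55 + a76 * b65 + a77 * b75, a70 * b06 + a71 * b16 + a72 * b26 + a73 * b36 + a74 * b46 + a75 * b56 + a76 * b66 + a77 * b76, a70 * b07 + a71 * b17 + a72 * b27 + a73 * b37 + a74 * b47 + a75 * b57 + a76 * b67 + a77 * b77] := by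
  ext i j
  fin_cases i <;> fin_cases j <;>
    simp only [Matrix.mul_apply, Fin.sum_univ_eight, Matrix.of_apply,
      vc0, vc1, vc2, vc3, vc4, vc5, vc6, vc7,
      vm0, vm1, vm2, vm3, vm4, vm5, vm6, vm7]

/-- The quantum Chevalley matrices pairwise commute. -/
theorem stmt_3 : A * B = B * A ∧ A * C = C * A ∧ B * C = C * B := by
  refine ⟨?_, ?_, ?_⟩ <;>
  · simp only [_root_.A, _root_.B, _root_.C]
    rw [mul_fin_eight, mul_fin_eight]
    refine congrArg _ ?_
    apply vec8_eq <;> apply vec8_eq <;> ring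
end
end

section
/- Let A, B, C be the quantum Chevalley matrices of the Bott-Samelson variety Z(α₁,α₂,α₁) defined in the context. Then (B·C + q₁q₃·I)·e₁ = e₇. (This is the quantum Giambelli formula σ₀₁₁ = σ₀₁₀ ∗ σ₀₀₁ + q₁q₃ in QH*(Z(α₁,α₂,α₁)), evaluated on the identity class σ₀₀₀.) -/
open MvPolynomial Matrix

noncomputable section

set_option maxHeartbeats 2000000 in
/-- Quantum Giambelli: σ₀₁₁ = σ₀₁₀ ∗ σ₀₀₁ + q₁q₃, evaluated on σ₀₀₀. -/
theorem stmt_6 :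
    (B * C + (q1*q3) • (1 : Matrix (Fin 8) (Fin 8) R)).mulVec
      (Pi.single (0 : Fin 8) (1 : R)) = Pi.single (6 : Fin 8) (1 : R) := by
  funext i
  rw [Matrix.mulVec_single]
  fin_cases i <;>
    simp [Matrix.mul_apply, Fin.sum_univ_eight, B, _root_.C, Matrix.one_apply,
      Pi.single_apply] <;> try ring
  all_goals rfl
end
end

section
/- Let A, B, C be the quantum Chevalley matrices of the Bott-Samelson variety Z(α₁,α₂,α₁) defined in the context. Then (A·B·C + q₁q₃·A)·e₁ = e₈. (This is the quantum Giambelli formula σ₁₁₁ = σ₁₀₀ ∗ σ₀₁₀ ∗ σ₀₀₁ + q₁q₃σ₁₀₀ for the point class in QH*(Z(α₁,α₂,α₁)), evaluated on the identity class σ₀₀₀.) -/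
open MvPolynomial Matrix

noncomputable section

set_option maxHeartbeats 1000000 in
lemma Ccol : _root_.C.mulVec (Pi.single (0 : Fin 8) (1 : R)) = Pi.single (3 : Fin 8) 1 := by
  funext i
  rw [Matrix.mulVec_single]
  fin_cases i <;> simp [_root_.C, Pi.single_apply] <;> rfl

set_option maxHeartbeats 1000000 in
lemma Bcol : _root_.B.mulVec (Pi.single (3 : Fin 8) (1 : R)) =
    (-(q1*q3)) • (Pi.single (0 : Fin 8) (1 : R) : Fin 8 → R) + (Pi.single (6 : Fin 8) (1 : R) : Fin 8 → R) := by
  funext i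
  rw [Matrix.mulVec_single]
  fin_cases i <;> simp [_root_.B, Pi.single_apply] <;> rfl

set_option maxHeartbeats 1000000 in
lemma Acol0 : _root_.A.mulVec (Pi.single (0 : Fin 8) (1 : R)) = Pi.single (1 : Fin 8) 1 := by
  funext i
  rw [Matrix.mulVec_single]
  fin_cases i <;> simp [_root_.A, Pi.single_apply] <;> rfl

set_option maxHeartbeats 1000000 in
lemma Acol6 : _root_.A.mulVec (Pi.single (6 : Fin 8) (1 : R)) = Pi.single (7 : Fin 8) 1 := by
  funext i
  rw [Matrix.mulVec_single]
  fin_cases i <;> simp [_root_.A, Pi.single_apply] <;> rfl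

/-- Quantum Giambelli: σ₁₁₁ = σ₁₀₀ ∗ σ₀₁₀ ∗ σ₀₀₁ + q₁q₃σ₁₀₀, evaluated on σ₀₀₀. -/
theorem stmt_7 :
    (A * B * C + (q1*q3) • A).mulVec
      (Pi.single (0 : Fin 8) (1 : R)) = Pi.single (7 : Fin 8) (1 : R) := by
  rw [Matrix.add_mulVec, Matrix.smul_mulVec, ← Matrix.mulVec_mulVec,
    ← Matrix.mulVec_mulVec, Ccol, Bcol, Acol0, Matrix.mulVec_add]
  have : _root_.A.mulVec ((-(q1*q3)) • (Pi.single (0 : Fin 8) (1 : R) : Fin 8 → R)) =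
      (-(q1*q3)) • _root_.A.mulVec (Pi.single (0 : Fin 8) (1 : R)) := by
    rw [Matrix.mulVec_smul]
  rw [this, Acol0, Acol6]
  funext i
  simp [Pi.single_apply]
end
end

section
/- Let A, B, C be the quantum Chevalley matrices of the Bott-Samelson variety Z(α₁,α₂,α₁) defined in the context. The eight matrices I, A, B, C, A·B − q₁q₃·I, A·C − q₃·A + q₃·B + q₁q₃·I, B·C + q₁q₃·I, and A·B·C + q₁q₃·A, applied to the first standard basis vector e₁, yield respectively the eight standard basis vectors e₁, e₂, e₃, e₄, e₅, e₆, e₇, e₈ of R⁸. In particular these eight matrices are R-linearly independent in the space of 8×8 matrices over R. (This expresses that the quantum Giambelli polynomials in σ₁₀₀, σ₀₁₀, σ₀₀₁ recover the full Bott-Samelson basis of QH*(Z(α₁,α₂,α₁)), which is a free module of rank 8 over ℤ[q₁,q₂,q₃].) -/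
open MvPolynomial Matrix

noncomputable section

/-- The eight quantum Giambelli matrices. -/
noncomputable def M : Fin 8 → Matrix (Fin 8) (Fin 8) R :=
  ![1, A, B, C,
    A * B - (q1*q3) • (1 : Matrix (Fin 8) (Fin 8) R),
    A * C - q3 • A + q3 • B + (q1*q3) • (1 : Matrix (Fin 8) (Fin 8) R),
    B * C + (q1*q3) • (1 : Matrix (Fin 8) (Fin 8) R),
    A * B * C + (q1*q3) • A]

lemma v85 {α : Type*} (x : α) (u : Fin 7 → α) : Matrix.vecCons x u 5 = u 4 := rfl
lemma v86 {α : Type*} (x : α) (u : Fin 7 → α) : Matrix.vecCons x u 6 = u 5 := rfl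
lemma v87 {α : Type*} (x : α) (u : Fin 7 → α) : Matrix.vecCons x u 7 = u 6 := rfl
lemma v75 {α : Type*} (x : α) (u : Fin 6 → α) : Matrix.vecCons x u 5 = u 4 := rfl
lemma v76 {α : Type*} (x : α) (u : Fin 6 → α) : Matrix.vecCons x u 6 = u 5 := rfl
lemma v65 {α : Type*} (x : α) (u : Fin 5 → α) : Matrix.vecCons x u 5 = u 4 := rfl

noncomputable def e1 : Fin 8 → R := Pi.single (0 : Fin 8) (1 : R)

set_option maxHeartbeats 4000000 in
lemma key0 : (1 : Matrix (Fin 8) (Fin 8) R).mulVec e1 = Pi.single (0 : Fin 8) (1 : R) := by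
  rw [e1]; exact Matrix.one_mulVec _

set_option maxHeartbeats 4000000 in
lemma key1 : A.mulVec e1 = Pi.single (1 : Fin 8) (1 : R) := by
  rw [e1, Matrix.mulVec_single_one]; funext j
  fin_cases j <;>
    simp [_root_.A, _root_.B, _root_.C, Matrix.mul_apply, Fin.sum_univ_succ, Pi.single_apply,
      Matrix.cons_val_two, Matrix.cons_val_three, Matrix.cons_val_four, Matrix.vecHead, Matrix.vecTail,
      v85, v86, v87, v75, v76, v65]

set_option maxHeartbeats 4000000 in
lemma key2 : B.mulVec e1 = Pi.single (2 : Fin 8) (1 : R) := by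
  rw [e1, Matrix.mulVec_single_one]; funext j
  fin_cases j <;>
    simp [_root_.A, _root_.B, _root_.C, Matrix.mul_apply, Fin.sum_univ_succ, Pi.single_apply,
      Matrix.cons_val_two, Matrix.cons_val_three, Matrix.cons_val_four, Matrix.vecHead, Matrix.vecTail,
      v85, v86, v87, v75, v76, v65]

set_option maxHeartbeats 4000000 in
lemma key3 : C.mulVec e1 = Pi.single (3 : Fin 8) (1 : R) := by
  rw [e1, Matrix.mulVec_single_one]; funext j
  fin_cases j <;>
    simp [_root_.A, _root_.B, _root_.C, Matrix.mul_apply, Fin.sum_univ_succ, Pi.single_apply,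
      Matrix.cons_val_two, Matrix.cons_val_three, Matrix.cons_val_four, Matrix.vecHead, Matrix.vecTail,
      v85, v86, v87, v75, v76, v65]

set_option maxHeartbeats 4000000 in
lemma key4 : (A * B - (q1*q3) • (1 : Matrix (Fin 8) (Fin 8) R)).mulVec e1
    = Pi.single (4 : Fin 8) (1 : R) := by
  rw [e1, Matrix.mulVec_single_one]; funext j
  fin_cases j <;>
    simp [_root_.A, _root_.B, _root_.C, Matrix.mul_apply, Fin.sum_univ_succ, Pi.single_apply,
      Matrix.cons_val_two, Matrix.cons_val_three, Matrix.cons_val_four, Matrix.vecHead, Matrix.vecTail,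
      v85, v86, v87, v75, v76, v65]

set_option maxHeartbeats 4000000 in
lemma key5 : (A * C - q3 • A + q3 • B + (q1*q3) • (1 : Matrix (Fin 8) (Fin 8) R)).mulVec e1
    = Pi.single (5 : Fin 8) (1 : R) := by
  rw [e1, Matrix.mulVec_single_one]; funext j
  fin_cases j <;>
    simp [_root_.A, _root_.B, _root_.C, Matrix.mul_apply, Fin.sum_univ_succ, Pi.single_apply,
      Matrix.cons_val_two, Matrix.cons_val_three, Matrix.cons_val_four, Matrix.vecHead, Matrix.vecTail,
      v85, v86, v87, v75, v76, v65]

set_option maxHeartbeats 4000000 in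
lemma key6 : (B * C + (q1*q3) • (1 : Matrix (Fin 8) (Fin 8) R)).mulVec e1
    = Pi.single (6 : Fin 8) (1 : R) := by
  rw [e1, Matrix.mulVec_single_one]; funext j
  fin_cases j <;>
    simp [_root_.A, _root_.B, _root_.C, Matrix.mul_apply, Fin.sum_univ_succ, Pi.single_apply,
      Matrix.cons_val_two, Matrix.cons_val_three, Matrix.cons_val_four, Matrix.vecHead, Matrix.vecTail,
      v85, v86, v87, v75, v76, v65]

set_option maxHeartbeats 4000000 in
lemma key7 : (A * B * C + (q1*q3) • A).mulVec e1 = Pi.single (7 : Fin 8) (1 : R) := by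
  rw [e1, Matrix.mulVec_single_one]; funext j
  fin_cases j <;>
    simp [_root_.A, _root_.B, _root_.C, Matrix.mul_apply, Fin.sum_univ_succ, Pi.single_apply,
      Matrix.cons_val_two, Matrix.cons_val_three, Matrix.cons_val_four, Matrix.vecHead, Matrix.vecTail,
      v85, v86, v87, v75, v76, v65]

lemma key : ∀ i : Fin 8, (M i).mulVec (Pi.single (0 : Fin 8) (1 : R))
    = Pi.single i (1 : R) := by
  intro i
  fin_cases i
  exacts [key0, key1, key2, key3, key4, key5, key6, key7]

noncomputable def f : Matrix (Fin 8) (Fin 8) R →ₗ[R] (Fin 8 → R) where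
  toFun N := N.mulVec (Pi.single (0 : Fin 8) (1 : R))
  map_add' N N' := Matrix.add_mulVec N N' _
  map_smul' c N := Matrix.smul_mulVec c N _

/-- The quantum Giambelli matrices applied to e₁ give the standard basis vectors,
and in particular they are R-linearly independent. -/
theorem stmt_8 :
    (∀ i : Fin 8, (M i).mulVec (Pi.single (0 : Fin 8) (1 : R))
        = Pi.single i (1 : R)) ∧
    LinearIndependent R M := by
  refine ⟨key, ?_⟩
  have h2 : LinearIndependent R (f ∘ M) := by
    have he : f ∘ M = ⇑(Pi.basisFun R (Fin 8)) := by
      funext i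
      exact (key i).trans (Pi.basisFun_apply R (Fin 8) i).symm
    rw [he]
    exact (Pi.basisFun R (Fin 8)).linearIndependent
  exact h2.of_comp f
end
end
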